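/- For every fixed positive integer n and nonnegative integer r ≥ 1, the sequence k ↦ |u_r(n,k)|, k = 0,...,n, is strictly log-concave: |u_r(n,k)|² > |u_r(n,k-1)|·|u_r(n,k+1)| for 1 ≤ k ≤ n-1. -/

import Mathlib

/-!
Up to sign, `centralu r n k` is the coefficient of `X ^ k` in `∏_{i < n} (X - (i² + r))`, i.e.
the elementary symmetric function `e_{n-k}` of the positive numbers `i² + r`, `i < n`. Elementary
symmetric functions of positive numbers are strictly log-concave: adjoining a number `a` maps
`e_j` to `e_j + a e_{j-1}`, and with `(u, v, w, z) = (e_{j-2}, e_{j-1}, e_j, e_{j+1})` the new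
`e_j² - e_{j-1} e_{j+1}` is `(w + a v)² - (v + a u)(z + a w) = (w² - v z) + a (v w - u z) +
a² (v² - u w)`, where strict log-concavity of the old sequence makes every term nonnegative and
the last one positive.
-/

/-- `centralu r n k` is the r-central factorial number with even indices of the first kind. -/
def centralu (r : ℕ) : ℕ → ℕ → ℤ
  | 0, 0 => 1
  | 0, _ + 1 => 0
  | n + 1, 0 => (-1) ^ (n + 1) * ∏ i ∈ Finset.range (n + 1), ((i : ℤ) ^ 2 + r)
  | n + 1, k + 1 => centralu r n k - ((n : ℤ) ^ 2 + r) * centralu r n (k + 1)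

open Finset Polynomial

section LogConcave

variable {R : Type*} [CommRing R] [LinearOrder R] [IsStrictOrderedRing R]

theorem mul_le_mul_of_log_concave {u v w z : R} (hv : 0 < v) (hw : 0 ≤ w)
    (hz : 0 ≤ z) (h₁ : u * w ≤ v ^ 2) (h₂ : v * z ≤ w ^ 2) : u * z ≤ v * w := by
  rcases hw.eq_or_lt with rfl | hw
  · have : z = 0 := by nlinarith
    simp [this]
  · have hvw : 0 < v * w := mul_pos hv hw
    refine le_of_mul_le_mul_right ?_ hvw
    calc u * z * (v * w) = (u * w) * (v * z) := by ring
      _ ≤ v ^ 2 * w ^ 2 := mul_le_mul h₁ h₂ (by positivity) (by positivity)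
      _ = v * w * (v * w) := by ring

theorem add_mul_mul_add_mul_lt_sq {t u v w z : R} (ht : 0 < t) (hv : 0 < v)
    (hw : 0 ≤ w) (hz : 0 ≤ z) (h₁ : u * w < v ^ 2) (h₂ : v * z ≤ w ^ 2) :
    (v + t * u) * (z + t * w) < (w + t * v) ^ 2 := by
  have h₃ := mul_le_mul_of_log_concave hv hw hz h₁.le h₂
  have : 0 < t ^ 2 * (v ^ 2 - u * w) := by have := sub_pos.2 h₁; positivity
  nlinarith [mul_nonneg ht.le (sub_nonneg.2 h₃)]

end LogConcave

namespace Multiset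

variable {R : Type*}

section Semiring

variable [CommSemiring R]

theorem esymm_zero (s : Multiset R) : s.esymm 0 = 1 := by
  simp [esymm, powersetCard_zero_left]

theorem esymm_cons_succ (a : R) (s : Multiset R) (k : ℕ) :
    (a ::ₘ s).esymm (k + 1) = s.esymm (k + 1) + a * s.esymm k := by
  simp [esymm, powersetCard_cons, map_map, sum_map_mul_left]

theorem esymm_eq_zero_of_card_lt {s : Multiset R} {k : ℕ} (h : card s < k) : s.esymm k = 0 := by
  simp [esymm, powersetCard_eq_empty _ h]

theorem esymm_nonneg [PartialOrder R] [IsOrderedRing R] {s : Multiset R} (hs : ∀ x ∈ s, 0 ≤ x)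
    (k : ℕ) : 0 ≤ s.esymm k :=
  sum_nonneg fun _ hx ↦ by
    obtain ⟨t, ht, rfl⟩ := mem_map.1 hx
    exact prod_nonneg fun x hx ↦ hs x (Multiset.subset_of_le (mem_powersetCard.1 ht).1 hx)

theorem esymm_pos [PartialOrder R] [IsStrictOrderedRing R] {s : Multiset R}
    (hs : ∀ x ∈ s, 0 < x) {k : ℕ} (hk : k ≤ card s) : 0 < s.esymm k := by
  induction s using Multiset.induction_on generalizing k with
  | empty => simp_all [esymm_zero]
  | cons a s ih =>
    obtain _ | k := k
    · simp [esymm_zero]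
    · rw [esymm_cons_succ]
      have := esymm_nonneg (fun x hx ↦ (hs x (mem_cons_of_mem hx)).le) (k + 1)
      have := ih (fun x hx ↦ hs x (mem_cons_of_mem hx)) (by simpa using hk)
      have := hs a (mem_cons_self a s)
      positivity

end Semiring

theorem esymm_mul_esymm_lt_sq [CommRing R] [LinearOrder R] [IsStrictOrderedRing R]
    {s : Multiset R} (hs : ∀ x ∈ s, 0 < x) {k : ℕ} (hk : k + 1 ≤ card s) :
    s.esymm k * s.esymm (k + 2) < s.esymm (k + 1) ^ 2 := by
  induction s using Multiset.induction_on generalizing k with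
  | empty => simp at hk
  | cons a s ih =>
    have ha : 0 < a := hs a (mem_cons_self a s)
    replace hs : ∀ x ∈ s, 0 < x := fun x hx ↦ hs x (mem_cons_of_mem hx)
    have hnonneg := esymm_nonneg fun x hx ↦ (hs x hx).le
    have hweak : ∀ j, s.esymm j * s.esymm (j + 2) ≤ s.esymm (j + 1) ^ 2 := fun j ↦ by
      by_cases hj : j + 1 ≤ card s
      · exact (ih hs hj).le
      · rw [esymm_eq_zero_of_card_lt (by omega : card s < j + 2), mul_zero]
        positivity
    rw [esymm_cons_succ, esymm_cons_succ]
    obtain _ | j := k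
    · -- `e_{-1} = 0`
      simpa [esymm_zero] using add_mul_mul_add_mul_lt_sq (u := 0) ha one_pos (hnonneg 1)
        (hnonneg 2) (by simp) (by simpa [esymm_zero] using hweak 0)
    · rw [esymm_cons_succ]
      exact add_mul_mul_add_mul_lt_sq ha (esymm_pos hs (by simp at hk; omega))
        (hnonneg _) (hnonneg _) (ih hs (by simp at hk; omega)) (hweak (j + 1))

end Multiset

theorem centralu_eq_coeff (r n k : ℕ) :
    centralu r n k = (∏ i ∈ range n, (X - C ((i : ℤ) ^ 2 + r))).coeff k := by
  induction n generalizing k with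
  | zero => cases k <;> simp [centralu, coeff_one]
  | succ n ih =>
    cases k with
    | zero =>
      simp only [centralu, coeff_zero_prod, coeff_sub, coeff_X_zero, coeff_C_zero, zero_sub,
        prod_neg, card_range]
    | succ k => rw [centralu, prod_range_succ, coeff_mul_X_sub_C, ih, ih, mul_comm]

def centraluRoots (r n : ℕ) : Multiset ℤ :=
  (range n).val.map fun i : ℕ ↦ (i : ℤ) ^ 2 + r

theorem centraluRoots_nonneg {r n : ℕ} {x : ℤ} (hx : x ∈ centraluRoots r n) : 0 ≤ x := by
  obtain ⟨i, -, rfl⟩ := Multiset.mem_map.1 hx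
  positivity

theorem centraluRoots_pos {r n : ℕ} (hr : 1 ≤ r) {x : ℤ} (hx : x ∈ centraluRoots r n) :
    0 < x := by
  obtain ⟨i, -, rfl⟩ := Multiset.mem_map.1 hx
  have : (0 : ℤ) < r := by exact_mod_cast hr
  positivity

theorem card_centraluRoots (r n : ℕ) : Multiset.card (centraluRoots r n) = n := by
  simp [centraluRoots]

theorem abs_centralu (r n k : ℕ) (hk : k ≤ n) :
    |centralu r n k| = (centraluRoots r n).esymm (n - k) := by
  have hprod : ∏ i ∈ range n, (X - C ((i : ℤ) ^ 2 + r)) =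
      ((centraluRoots r n).map fun t ↦ X - C t).prod := by
    rw [centraluRoots, Multiset.map_map, Function.comp_def, Finset.prod]
  rw [centralu_eq_coeff, hprod, Multiset.prod_X_sub_C_coeff _ (by rwa [card_centraluRoots]),
    card_centraluRoots, abs_mul, abs_pow, abs_neg, abs_one, one_pow, one_mul,
    abs_of_nonneg (Multiset.esymm_nonneg (fun _ ↦ centraluRoots_nonneg) _)]

theorem centralu_abs_strict_log_concave (r n k : ℕ) (hr : 1 ≤ r)
    (hk : 1 ≤ k) (hkn : k ≤ n - 1) :
    |centralu r n (k - 1)| * |centralu r n (k + 1)| < |centralu r n k| ^ 2 := by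
  obtain ⟨j, rfl⟩ : ∃ j, n = k + 1 + j := ⟨n - k - 1, by omega⟩
  have key := Multiset.esymm_mul_esymm_lt_sq (fun _ ↦ centraluRoots_pos hr)
    (by rw [card_centraluRoots]; omega : j + 1 ≤ Multiset.card (centraluRoots r (k + 1 + j)))
  rw [abs_centralu r _ (k - 1) (by omega), abs_centralu r _ (k + 1) (by omega),
    abs_centralu r _ k (by omega), show k + 1 + j - (k - 1) = j + 2 by omega,
    show k + 1 + j - (k + 1) = j by omega, show k + 1 + j - k = j + 1 by omega, mul_comm]
  exact key
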